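/- Let b ∈ ℝ, T > 0, and let κ be an n×n real matrix with trace zero. Let w : (0,T) × B → ℝ be continuously differentiable in t and twice continuously differentiable in m, and set f(t,m) = w(t,m) ρ(m) and c(m) = 2 m·κm + n(b/2 − 1). Then at every (t,m) ∈ (0,T) × B, ∂_t f + ∇·((κm) f) − (1/2)∇·((b m/ρ) f) − (1/2)Δf = ρ [ ∂_t w − (1/2)Δw − ((b−4)m − 2ρ κm)/(2ρ) · ∇w − (c/ρ) w ]. -/

import Mathlib

/-!
Every term of the operator is expanded by the product rules
`div (g • V) = g div V + ⟪∇g, V⟫` and `Δ (f g) = f Δg + 2 ⟪∇f, ∇g⟫ + g Δf`, together with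
`∇ρ = -2m`, `Δρ = -2n`, `div m = n` and `div (κm) = tr κ = 0` (the divergence is the trace of
the derivative). Since `ρ > 0` on the ball, the drift `b m f / ρ` is just `b m w` there, and
what remains is an identity of rational functions in `ρ`.
-/

open MeasureTheory
open scoped RealInnerProductSpace

/-- The divergence of a vector field on Euclidean space. -/
noncomputable def vdiv {n : ℕ}
    (F : EuclideanSpace ℝ (Fin n) → EuclideanSpace ℝ (Fin n))
    (m : EuclideanSpace ℝ (Fin n)) : ℝ :=
  ∑ i, ⟪fderiv ℝ F m (EuclideanSpace.single i 1), EuclideanSpace.single i 1⟫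

/-- The Laplacian of a scalar field on Euclidean space. -/
noncomputable def lap {n : ℕ}
    (g : EuclideanSpace ℝ (Fin n) → ℝ) (m : EuclideanSpace ℝ (Fin n)) : ℝ :=
  vdiv (gradient g) m

open Topology

section Gradient

variable {F : Type*} [NormedAddCommGroup F] [InnerProductSpace ℝ F] [CompleteSpace F]
  {f g : F → ℝ} {x : F}

theorem gradient_mul (hf : DifferentiableAt ℝ f x) (hg : DifferentiableAt ℝ g x) :
    gradient (fun y => f y * g y) x = f x • gradient g x + g x • gradient f x := by
  refine ext_inner_right ℝ fun v => ?_
  simp [inner_gradient_left, fderiv_fun_mul hf hg, inner_add_left, real_inner_smul_left]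

theorem gradient_const_mul (c : ℝ) (hf : DifferentiableAt ℝ f x) :
    gradient (fun y => c * f y) x = c • gradient f x := by
  simpa using gradient_mul (differentiableAt_const c) hf

theorem hasGradientAt_const_sub_norm_sq (b : ℝ) (x : F) :
    HasGradientAt (fun y => b - ‖y‖ ^ 2) ((-2 : ℝ) • x) x := by
  have := ((hasStrictFDerivAt_norm_sq x).hasFDerivAt).const_sub b
  rw [hasGradientAt_iff_hasFDerivAt]
  refine this.congr_fderiv (ContinuousLinearMap.ext fun v => ?_)
  simp

theorem ContDiffAt.differentiableAt_gradient (hf : ContDiffAt ℝ 2 f x) :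
    DifferentiableAt ℝ (gradient f) x := by
  have : gradient f = fun y => (InnerProductSpace.toDual ℝ F).symm (fderiv ℝ f y) := rfl
  rw [this]
  exact (InnerProductSpace.toDual ℝ F).symm.toContinuousLinearEquiv.differentiableAt.comp x
    ((hf.fderiv_right le_rfl).differentiableAt one_ne_zero)

theorem gradient_const_sub_norm_sq (b : ℝ) :
    gradient (fun y : F => b - ‖y‖ ^ 2) = fun x => (-2 : ℝ) • x :=
  funext fun x => (hasGradientAt_const_sub_norm_sq b x).gradient

end Gradient

section Divergence

variable {n : ℕ} {F G : EuclideanSpace ℝ (Fin n) → EuclideanSpace ℝ (Fin n)}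
  {m : EuclideanSpace ℝ (Fin n)}

theorem vdiv_eq_trace (F : EuclideanSpace ℝ (Fin n) → EuclideanSpace ℝ (Fin n))
    (m : EuclideanSpace ℝ (Fin n)) :
    vdiv F m = LinearMap.trace ℝ _ (fderiv ℝ F m : _ →ₗ[ℝ] EuclideanSpace ℝ (Fin n)) := by
  rw [LinearMap.trace_eq_sum_inner _ (EuclideanSpace.basisFun (Fin n) ℝ)]
  simp [vdiv, real_inner_comm]

theorem Filter.EventuallyEq.vdiv_eq (h : F =ᶠ[𝓝 m] G) : vdiv F m = vdiv G m := by
  simp only [vdiv, h.fderiv_eq]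

theorem vdiv_add (hF : DifferentiableAt ℝ F m) (hG : DifferentiableAt ℝ G m) :
    vdiv (fun x => F x + G x) m = vdiv F m + vdiv G m := by
  simp only [vdiv_eq_trace, fderiv_fun_add hF hG, ContinuousLinearMap.toLinearMap_add, map_add]

theorem vdiv_smul {g : EuclideanSpace ℝ (Fin n) → ℝ} (hg : DifferentiableAt ℝ g m)
    (hF : DifferentiableAt ℝ F m) :
    vdiv (fun x => g x • F x) m = g m * vdiv F m + ⟪gradient g m, F m⟫ := by
  simp [vdiv_eq_trace, fderiv_fun_smul hg hF, LinearMap.trace_smulRight, inner_gradient_left]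

theorem vdiv_continuousLinearMap (A : EuclideanSpace ℝ (Fin n) →L[ℝ] EuclideanSpace ℝ (Fin n)) :
    vdiv A m = LinearMap.trace ℝ _ (A : _ →ₗ[ℝ] EuclideanSpace ℝ (Fin n)) := by
  rw [vdiv_eq_trace, A.fderiv]

theorem vdiv_id : vdiv (fun x => x) m = n :=
  (vdiv_continuousLinearMap (.id ℝ _)).trans (by simp)

theorem vdiv_toEuclideanLin (κ : Matrix (Fin n) (Fin n) ℝ) :
    vdiv (Matrix.toEuclideanLin κ) m = κ.trace := by
  rw [← LinearMap.coe_toContinuousLinearMap' (Matrix.toEuclideanLin κ), vdiv_continuousLinearMap,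
    LinearMap.coe_toContinuousLinearMap,
    LinearMap.trace_eq_matrix_trace ℝ (EuclideanSpace.basisFun (Fin n) ℝ).toBasis,
    Matrix.toEuclideanLin_eq_toLin_orthonormal, LinearMap.toMatrix_toLin]

end Divergence

section Laplacian

variable {n : ℕ} {f g : EuclideanSpace ℝ (Fin n) → ℝ} {m : EuclideanSpace ℝ (Fin n)}

theorem lap_mul (hf : ContDiffAt ℝ 2 f m) (hg : ContDiffAt ℝ 2 g m) :
    lap (fun x => f x * g x) m
      = f m * lap g m + 2 * ⟪gradient f m, gradient g m⟫ + g m * lap f m := by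
  have hgrad : gradient (fun x => f x * g x) =ᶠ[𝓝 m]
      fun x => f x • gradient g x + g x • gradient f x := by
    filter_upwards [hf.eventually (by simp), hg.eventually (by simp)] with x hfx hgx
    exact gradient_mul (hfx.differentiableAt two_ne_zero) (hgx.differentiableAt two_ne_zero)
  have hf' := hf.differentiableAt two_ne_zero
  have hg' := hg.differentiableAt two_ne_zero
  rw [lap, hgrad.vdiv_eq,
    vdiv_add (hf'.fun_smul hg.differentiableAt_gradient)
      (hg'.fun_smul hf.differentiableAt_gradient),
    vdiv_smul hf' hg.differentiableAt_gradient, vdiv_smul hg' hf.differentiableAt_gradient,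
    real_inner_comm (gradient f m)]
  simp only [lap]
  ring

theorem lap_const_sub_norm_sq (b : ℝ) : lap (fun y => b - ‖y‖ ^ 2) m = -2 * n := by
  rw [lap, gradient_const_sub_norm_sq,
    vdiv_smul (differentiableAt_const _) differentiableAt_fun_id, vdiv_id]
  simp

end Laplacian

theorem const_sub_norm_sq_pos_of_mem_ball {E : Type*} [SeminormedAddCommGroup E] {b : ℝ} {x : E}
    (hx : x ∈ Metric.ball 0 (Real.sqrt b)) : 0 < b - ‖x‖ ^ 2 :=
  sub_pos.2 ((Real.lt_sqrt (norm_nonneg x)).1 (mem_ball_zero_iff.1 hx))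

section FokkerPlanckTerms

variable {n : ℕ} {b : ℝ} {w : EuclideanSpace ℝ (Fin n) → ℝ} {m : EuclideanSpace ℝ (Fin n)}

theorem vdiv_mul_const_sub_norm_sq_smul_toEuclideanLin {κ : Matrix (Fin n) (Fin n) ℝ}
    (hκ : κ.trace = 0) (hw : DifferentiableAt ℝ w m) :
    vdiv (fun x => (w x * (b - ‖x‖ ^ 2)) • Matrix.toEuclideanLin κ x) m
      = -2 * w m * ⟪m, Matrix.toEuclideanLin κ m⟫
        + (b - ‖m‖ ^ 2) * ⟪gradient w m, Matrix.toEuclideanLin κ m⟫ := by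
  have hρ : DifferentiableAt ℝ (fun x : EuclideanSpace ℝ (Fin n) => b - ‖x‖ ^ 2) m :=
    (hasGradientAt_const_sub_norm_sq b m).differentiableAt
  have hκm : DifferentiableAt ℝ (Matrix.toEuclideanLin κ) m := by
    rw [← LinearMap.coe_toContinuousLinearMap']
    exact ContinuousLinearMap.differentiableAt _
  rw [vdiv_smul (hw.fun_mul hρ) hκm, vdiv_toEuclideanLin, hκ, gradient_mul hw hρ,
    gradient_const_sub_norm_sq, inner_add_left, real_inner_smul_left, real_inner_smul_left,
    real_inner_smul_left]
  ring

theorem vdiv_mul_const_sub_norm_sq_div_smul (hm : m ∈ Metric.ball 0 (Real.sqrt b))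
    (hw : DifferentiableAt ℝ w m) :
    vdiv (fun x => (b * (w x * (b - ‖x‖ ^ 2)) / (b - ‖x‖ ^ 2)) • x) m
      = b * w m * n + b * ⟪gradient w m, m⟫ := by
  have hcancel : (fun x => (b * (w x * (b - ‖x‖ ^ 2)) / (b - ‖x‖ ^ 2)) • x)
      =ᶠ[𝓝 m] fun x => (b * w x) • x := by
    filter_upwards [Metric.isOpen_ball.mem_nhds hm] with x hx
    rw [← mul_assoc, mul_div_cancel_right₀ _ (const_sub_norm_sq_pos_of_mem_ball hx).ne']
  rw [hcancel.vdiv_eq, vdiv_smul (hw.const_mul b) differentiableAt_fun_id, vdiv_id,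
    gradient_const_mul b hw, real_inner_smul_left]

theorem lap_mul_const_sub_norm_sq (hw : ContDiffAt ℝ 2 w m) :
    lap (fun x => w x * (b - ‖x‖ ^ 2)) m
      = (b - ‖m‖ ^ 2) * lap w m - 4 * ⟪gradient w m, m⟫ - 2 * n * w m := by
  rw [lap_mul hw (contDiffAt_const.sub (contDiff_norm_sq ℝ).contDiffAt), lap_const_sub_norm_sq,
    gradient_const_sub_norm_sq, real_inner_smul_right]
  ring

end FokkerPlanckTerms

theorem fokker_planck_transformation_rho_general
    (n : ℕ) (b T : ℝ)
    (κ : Matrix (Fin n) (Fin n) ℝ) (hκ : Matrix.trace κ = 0)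
    (w : ℝ → EuclideanSpace ℝ (Fin n) → ℝ)
    (hwt : ∀ m ∈ Metric.ball (0 : EuclideanSpace ℝ (Fin n)) (Real.sqrt b),
      ContDiffOn ℝ 1 (fun s => w s m) (Set.Ioo 0 T))
    (hwm : ∀ t ∈ Set.Ioo (0 : ℝ) T,
      ContDiffOn ℝ 2 (w t) (Metric.ball (0 : EuclideanSpace ℝ (Fin n)) (Real.sqrt b))) :
    ∀ t ∈ Set.Ioo (0 : ℝ) T,
      ∀ m ∈ Metric.ball (0 : EuclideanSpace ℝ (Fin n)) (Real.sqrt b),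
        deriv (fun s => w s m * (b - ‖m‖ ^ 2)) t
          + vdiv (fun x => (w t x * (b - ‖x‖ ^ 2)) • Matrix.toEuclideanLin κ x) m
          - (1 / 2) * vdiv (fun x =>
              (b * (w t x * (b - ‖x‖ ^ 2)) / (b - ‖x‖ ^ 2)) • x) m
          - (1 / 2) * lap (fun x => w t x * (b - ‖x‖ ^ 2)) m
        = (b - ‖m‖ ^ 2) *
            (deriv (fun s => w s m) t
              - (1 / 2) * lap (w t) m
              - ⟪(b - 4) • m - (2 * (b - ‖m‖ ^ 2)) • Matrix.toEuclideanLin κ m,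
                  gradient (w t) m⟫ / (2 * (b - ‖m‖ ^ 2))
              - ((2 * ⟪m, Matrix.toEuclideanLin κ m⟫ + (n : ℝ) * (b / 2 - 1))
                  / (b - ‖m‖ ^ 2)) * w t m) := by
  intro t ht m hm
  have hw : ContDiffAt ℝ 2 (w t) m := (hwm t ht).contDiffAt (Metric.isOpen_ball.mem_nhds hm)
  have hwt' : DifferentiableAt ℝ (fun s => w s m) t :=
    ((hwt m hm).contDiffAt (isOpen_Ioo.mem_nhds ht)).differentiableAt one_ne_zero
  rw [deriv_mul_const hwt',
    vdiv_mul_const_sub_norm_sq_smul_toEuclideanLin hκ (hw.differentiableAt two_ne_zero),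
    vdiv_mul_const_sub_norm_sq_div_smul hm (hw.differentiableAt two_ne_zero),
    lap_mul_const_sub_norm_sq hw, inner_sub_left, real_inner_smul_left, real_inner_smul_left,
    real_inner_comm (gradient (w t) m) m,
    real_inner_comm (gradient (w t) m) (Matrix.toEuclideanLin κ m)]
  field_simp [(const_sub_norm_sq_pos_of_mem_ball hm).ne']
  ring

/-- Transformation identity: if `f = w ρ` with `ρ(m) = b − ‖m‖²`, `κ` a trace-free
matrix, and `c(m) = 2 m·κm + n(b/2 − 1)`, then on `(0,T) × B` the Fokker–Planck
operator applied to `f` equals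
`ρ [ ∂_t w − (1/2)Δw − ((b−4)m − 2ρκm)/(2ρ)·∇w − (c/ρ) w ]`. -/
theorem fokker_planck_transformation_rho
    (n : ℕ) (hn : 1 ≤ n) (b T : ℝ) (hT : 0 < T)
    (κ : Matrix (Fin n) (Fin n) ℝ) (hκ : Matrix.trace κ = 0)
    (w : ℝ → EuclideanSpace ℝ (Fin n) → ℝ)
    (hwt : ∀ m ∈ Metric.ball (0 : EuclideanSpace ℝ (Fin n)) (Real.sqrt b),
      ContDiffOn ℝ 1 (fun s => w s m) (Set.Ioo 0 T))
    (hwm : ∀ t ∈ Set.Ioo (0 : ℝ) T,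
      ContDiffOn ℝ 2 (w t) (Metric.ball (0 : EuclideanSpace ℝ (Fin n)) (Real.sqrt b))) :
    ∀ t ∈ Set.Ioo (0 : ℝ) T,
      ∀ m ∈ Metric.ball (0 : EuclideanSpace ℝ (Fin n)) (Real.sqrt b),
        deriv (fun s => w s m * (b - ‖m‖ ^ 2)) t
          + vdiv (fun x => (w t x * (b - ‖x‖ ^ 2)) • Matrix.toEuclideanLin κ x) m
          - (1 / 2) * vdiv (fun x =>
              (b * (w t x * (b - ‖x‖ ^ 2)) / (b - ‖x‖ ^ 2)) • x) m
          - (1 / 2) * lap (fun x => w t x * (b - ‖x‖ ^ 2)) m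
        = (b - ‖m‖ ^ 2) *
            (deriv (fun s => w s m) t
              - (1 / 2) * lap (w t) m
              - ⟪(b - 4) • m - (2 * (b - ‖m‖ ^ 2)) • Matrix.toEuclideanLin κ m,
                  gradient (w t) m⟫ / (2 * (b - ‖m‖ ^ 2))
              - ((2 * ⟪m, Matrix.toEuclideanLin κ m⟫ + (n : ℝ) * (b / 2 - 1))
                  / (b - ‖m‖ ^ 2)) * w t m) :=
  fokker_planck_transformation_rho_general n b T κ hκ w hwt hwm
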